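/- arXiv:2311.02045 — 4 statements merged into one kernel-verified Lean document; each statement's English description precedes it below -/
import Mathlib

section
/- Let ε ≥ 0 and let P be a behavior in the CHSH Bell scenario admitting a local-hidden-variable model. If P(0,0|0,0) ≤ ε and P(1,1|1,0) ≤ ε, then P(1,1|1,1) − P(1,1|0,1) ≤ 2ε. (Relaxed FTI argument: generalized degree of success q − r − 2ε is nonpositive for LHV models when the zero-probability constraints are satisfied only up to tolerance ε.) -/
open Finset

def lhvBehavior {Λ : Type*} [Fintype Λ] (w : Λ → ℝ) (f g : Λ → Fin 2 → Fin 2)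
    (a b x y : Fin 2) : ℝ :=
  ∑ l, w l * (if f l x = a then (1 : ℝ) else 0) * (if g l y = b then (1 : ℝ) else 0)

/-- The left side is positive only when `α 0 = 0`, `α 1 = 1`, `β 1 = 1`; then whatever `β 0` is,
one of the two terms on the right equals `1`. -/
lemma deterministic_fti_le (α β : Fin 2 → Fin 2) :
    (if α 1 = 1 then (1 : ℝ) else 0) * (if β 1 = 1 then 1 else 0)
        - (if α 0 = 1 then 1 else 0) * (if β 1 = 1 then 1 else 0)
      ≤ (if α 0 = 0 then 1 else 0) * (if β 0 = 0 then 1 else 0)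
        + (if α 1 = 1 then 1 else 0) * (if β 0 = 1 then 1 else 0) := by
  have hα₀ : α 0 = 0 ∨ α 0 = 1 := by omega
  have hβ₀ : β 0 = 0 ∨ β 0 = 1 := by omega
  rcases hα₀ with hα₀ | hα₀ <;> rcases hβ₀ with hβ₀ | hβ₀ <;>
    simp only [hα₀, hβ₀] <;> split_ifs <;> norm_num

lemma lhvBehavior_fti_le {Λ : Type*} [Fintype Λ] {w : Λ → ℝ} (hw : ∀ l, 0 ≤ w l)
    (f g : Λ → Fin 2 → Fin 2) :
    lhvBehavior w f g 1 1 1 1 - lhvBehavior w f g 1 1 0 1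
      ≤ lhvBehavior w f g 0 0 0 0 + lhvBehavior w f g 1 1 1 0 := by
  simp only [lhvBehavior, ← sum_add_distrib, ← sum_sub_distrib]
  refine sum_le_sum fun l _ => ?_
  have := mul_le_mul_of_nonneg_left (deterministic_fti_le (f l) (g l)) (hw l)
  linarith

theorem stmt_4_general
    (P : Fin 2 → Fin 2 → Fin 2 → Fin 2 → ℝ)
    (Λ : Type) [Fintype Λ]
    (w : Λ → ℝ) (f g : Λ → Fin 2 → Fin 2)
    (hw : ∀ l, 0 ≤ w l)
    (hP : ∀ a b x y, P a b x y =
      ∑ l, w l * (if f l x = a then (1 : ℝ) else 0) * (if g l y = b then (1 : ℝ) else 0))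
    (ε : ℝ) (h1 : P 0 0 0 0 ≤ ε) (h3 : P 1 1 1 0 ≤ ε) :
    P 1 1 1 1 - P 1 1 0 1 ≤ 2 * ε := by
  obtain rfl : P = lhvBehavior w f g := by funext a b x y; exact hP a b x y
  have := lhvBehavior_fti_le hw f g
  linarith

/-- CHSH Bell scenario: `P a b x y` is the probability of outcomes `(a, b)`
given inputs `(x, y)`, with an LHV model given by a finite hidden-variable
type `Λ`, weights `w`, and deterministic response functions `f` (Alice)
and `g` (Bob). -/
theorem stmt_4
    (P : Fin 2 → Fin 2 → Fin 2 → Fin 2 → ℝ)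
    (hPpos : ∀ a b x y, 0 ≤ P a b x y)
    (hPnorm : ∀ x y, ∑ a, ∑ b, P a b x y = 1)
    (Λ : Type) [Fintype Λ]
    (w : Λ → ℝ) (f g : Λ → Fin 2 → Fin 2)
    (hw : ∀ l, 0 ≤ w l) (hw1 : ∑ l, w l = 1)
    (hP : ∀ a b x y, P a b x y =
      ∑ l, w l * (if f l x = a then (1 : ℝ) else 0) * (if g l y = b then (1 : ℝ) else 0))
    (ε : ℝ) (hε : 0 ≤ ε) (h1 : P 0 0 0 0 ≤ ε) (h3 : P 1 1 1 0 ≤ ε) :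
    P 1 1 1 1 - P 1 1 0 1 ≤ 2 * ε :=
  stmt_4_general P Λ w f g hw hP ε h1 h3
end

section
/- Let k ≥ 2, d ≥ 2, and let P be a behavior in the bipartite k-input d-output Bell scenario admitting a local-hidden-variable model. Suppose P(A_i < B_{i−1}) = 0 and P(B_{i−1} < A_{i−1}) = 0 for every i ∈ {1,…,k−1}. Then P(A_{k−1} < B_{k−1}) ≤ P(A_0 < B_{k−1}). (Generalized FTI argument: the degree of success q − r, with q = P(A_{k−1} < B_{k−1}) and r = P(A_0 < B_{k−1}), is nonpositive for every LHV model.) -/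
/-!
In a local-hidden-variable model each hidden state `λ` fixes deterministic outputs
`A_x = f λ x` and `B_y = g λ y`, and every probability is the total weight of the states whose
outputs satisfy the corresponding relation. A zero-probability constraint therefore holds
pointwise on the states of positive weight, where the constraints chain into
`A_0 ≤ B_0 ≤ A_1 ≤ B_1 ≤ ⋯ ≤ A_{k-1}`. Hence every such state with `A_{k-1} < B_{k-1}` also
has `A_0 < B_{k-1}`.
-/

/-- `probLT d P x y` is `P(A_x < B_y)`, where `P a b x y` is the probability of
outcomes `(a, b)` given inputs `(x, y)` in a `k`-input `d`-output Bell scenario. -/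
noncomputable def probLT (d : ℕ) (P : ℕ → ℕ → ℕ → ℕ → ℝ) (x y : ℕ) : ℝ :=
  ∑ a ∈ Finset.range d, ∑ b ∈ Finset.range d, if a < b then P a b x y else 0

/-- `probGT d P x y` is `P(A_x > B_y)`. -/
noncomputable def probGT (d : ℕ) (P : ℕ → ℕ → ℕ → ℕ → ℝ) (x y : ℕ) : ℝ :=
  ∑ a ∈ Finset.range d, ∑ b ∈ Finset.range d, if b < a then P a b x y else 0

open Finset

section HiddenVariables

variable {Λ : Type*} [Fintype Λ] {w : Λ → ℝ}

theorem sum_range_sum_range_ite_eq_sum_filter {d : ℕ} {u v : Λ → ℕ}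
    (hu : ∀ l, u l < d) (hv : ∀ l, v l < d) (c : ℕ → ℕ → Prop) [DecidableRel c] :
    ∑ a ∈ range d, ∑ b ∈ range d,
      (if c a b then
        ∑ l, w l * (if u l = a then (1 : ℝ) else 0) * (if v l = b then (1 : ℝ) else 0)
      else 0) =
    ∑ l with c (u l) (v l), w l := by
  rw [sum_filter]
  simp only [ite_sum_zero]
  conv_lhs => enter [2, a]; rw [sum_comm]
  rw [sum_comm]
  refine sum_congr rfl fun l _ => ?_
  rw [sum_eq_single_of_mem (u l) (mem_range.2 (hu l)) fun a _ ha => by simp [Ne.symm ha],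
    sum_eq_single_of_mem (v l) (mem_range.2 (hv l)) fun b _ hb => by simp [Ne.symm hb]]
  simp

theorem probLT_eq_sum_filter {d : ℕ} {P : ℕ → ℕ → ℕ → ℕ → ℝ} {x y : ℕ} {u v : Λ → ℕ}
    (hu : ∀ l, u l < d) (hv : ∀ l, v l < d)
    (hP : ∀ a b, P a b x y =
      ∑ l, w l * (if u l = a then (1 : ℝ) else 0) * (if v l = b then (1 : ℝ) else 0)) :
    probLT d P x y = ∑ l with u l < v l, w l := by
  simp only [probLT, hP]
  exact sum_range_sum_range_ite_eq_sum_filter hu hv (· < ·)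

theorem probGT_eq_sum_filter {d : ℕ} {P : ℕ → ℕ → ℕ → ℕ → ℝ} {x y : ℕ} {u v : Λ → ℕ}
    (hu : ∀ l, u l < d) (hv : ∀ l, v l < d)
    (hP : ∀ a b, P a b x y =
      ∑ l, w l * (if u l = a then (1 : ℝ) else 0) * (if v l = b then (1 : ℝ) else 0)) :
    probGT d P x y = ∑ l with v l < u l, w l := by
  simp only [probGT, hP]
  exact sum_range_sum_range_ite_eq_sum_filter hu hv (fun a b => b < a)

theorem not_of_sum_filter_eq_zero (hw : ∀ l, 0 ≤ w l) {p : Λ → Prop} [DecidablePred p]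
    (h : ∑ l with p l, w l = 0) {l : Λ} (hl : 0 < w l) : ¬ p l := fun hp =>
  hl.ne' <| (sum_eq_zero_iff_of_nonneg fun l _ => hw l).mp h l (by simpa using hp)

theorem sum_filter_le_sum_filter_of_imp (hw : ∀ l, 0 ≤ w l) {p q : Λ → Prop}
    [DecidablePred p] [DecidablePred q] (h : ∀ l, 0 < w l → p l → q l) :
    ∑ l with p l, w l ≤ ∑ l with q l, w l := by
  rw [sum_filter, sum_filter]
  refine sum_le_sum fun l _ => ?_
  rcases (hw l).eq_or_lt with hl | hl
  · simp [← hl]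
  · split_ifs with hp hq
    · exact le_rfl
    · exact absurd (h l hl hp) hq
    · exact hw l
    · exact le_rfl

end HiddenVariables

theorem le_of_forall_lt_le_le {F G : ℕ → ℕ} {n : ℕ}
    (h : ∀ i < n, F i ≤ G i ∧ G i ≤ F (i + 1)) : F 0 ≤ F n := by
  induction n with
  | zero => rfl
  | succ n ih =>
    obtain ⟨hFG, hGF⟩ := h n n.lt_succ_self
    exact (ih fun i hi => h i (hi.trans n.lt_succ_self)).trans (hFG.trans hGF)

theorem stmt_10_general (k d : ℕ) (hk : 2 ≤ k)
    (P : ℕ → ℕ → ℕ → ℕ → ℝ)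
    (Λ : Type) [Fintype Λ] (w : Λ → ℝ) (f g : Λ → ℕ → ℕ)
    (hw : ∀ l, 0 ≤ w l)
    (hf : ∀ l x, x < k → f l x < d) (hg : ∀ l y, y < k → g l y < d)
    (hP : ∀ a b x y, x < k → y < k → P a b x y =
      ∑ l, w l * (if f l x = a then (1 : ℝ) else 0) * (if g l y = b then (1 : ℝ) else 0))
    (hzero : ∀ i, 1 ≤ i → i ≤ k - 1 →
      probLT d P i (i - 1) = 0 ∧ probGT d P (i - 1) (i - 1) = 0) :
    probLT d P (k - 1) (k - 1) ≤ probLT d P 0 (k - 1) := by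
  have hLT : ∀ x < k, ∀ y < k, probLT d P x y = ∑ l with f l x < g l y, w l :=
    fun x hx y hy =>
      probLT_eq_sum_filter (fun l => hf l x hx) (fun l => hg l y hy) (hP · · x y hx hy)
  have hGT : ∀ x < k, ∀ y < k, probGT d P x y = ∑ l with g l y < f l x, w l :=
    fun x hx y hy =>
      probGT_eq_sum_filter (fun l => hf l x hx) (fun l => hg l y hy) (hP · · x y hx hy)
  rw [hLT _ (by omega) _ (by omega), hLT _ (by omega) _ (by omega)]
  refine sum_filter_le_sum_filter_of_imp hw fun l hl hlt => ?_
  have hchain : f l 0 ≤ f l (k - 1) := le_of_forall_lt_le_le fun i hi => by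
    obtain ⟨hBA, hAB⟩ := hzero (i + 1) (by omega) (by omega)
    rw [hLT _ (by omega) _ (by omega)] at hBA
    rw [hGT _ (by omega) _ (by omega)] at hAB
    exact ⟨not_lt.mp (not_of_sum_filter_eq_zero hw hAB hl),
      not_lt.mp (not_of_sum_filter_eq_zero hw hBA hl)⟩
  exact hchain.trans_lt hlt

/-- Generalized FTI argument: for any LHV behavior satisfying the zero-probability
constraints `P(A_i < B_{i−1}) = 0` and `P(B_{i−1} < A_{i−1}) = 0` for
`i ∈ {1,…,k−1}`, the degree of success `q − r` is nonpositive. -/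
theorem stmt_10 (k d : ℕ) (hk : 2 ≤ k) (hd : 2 ≤ d)
    (P : ℕ → ℕ → ℕ → ℕ → ℝ)
    (hPpos : ∀ a b x y, a < d → b < d → x < k → y < k → 0 ≤ P a b x y)
    (hPnorm : ∀ x y, x < k → y < k →
      ∑ a ∈ Finset.range d, ∑ b ∈ Finset.range d, P a b x y = 1)
    (Λ : Type) [Fintype Λ] (w : Λ → ℝ) (f g : Λ → ℕ → ℕ)
    (hw : ∀ l, 0 ≤ w l) (hw1 : ∑ l, w l = 1)
    (hf : ∀ l x, x < k → f l x < d) (hg : ∀ l y, y < k → g l y < d)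
    (hP : ∀ a b x y, x < k → y < k → P a b x y =
      ∑ l, w l * (if f l x = a then (1 : ℝ) else 0) * (if g l y = b then (1 : ℝ) else 0))
    (hzero : ∀ i, 1 ≤ i → i ≤ k - 1 →
      probLT d P i (i - 1) = 0 ∧ probGT d P (i - 1) (i - 1) = 0) :
    probLT d P (k - 1) (k - 1) ≤ probLT d P 0 (k - 1) :=
  stmt_10_general k d hk P Λ w f g hw hf hg hP hzero
end

section
/- Let k ≥ 2 be even and d ≥ 2. Then there exist permutations π_A and π_B of the input set {0,…,k−1} such that for every behavior P in the bipartite k-input d-output Bell scenario, the relabeled behavior P′ defined by P′(a,b|x′,y′) := P(d−1−a, d−1−b | π_A(x′), π_B(y′)) satisfies: P fulfills the generalized Hardy conditions (P(A_i > B_{i−1}) = 0 and P(A_{i−1} > B_i) = 0 for all odd i ∈ {1,…,k−1}; P(A_i < B_{i−1}) = 0 and P(A_{i−1} < B_i) = 0 for all even i ∈ {1,…,k−1}; and P(A_0 < B_0) = 0) if and only if P′ fulfills the generalized FTI conditions (P′(A_i < B_{i−1}) = 0 and P′(B_{i−1} < A_{i−1}) = 0 for all i ∈ {1,…,k−1};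 and P′(A_0 < B_{k−1}) = 0); moreover P(A_{k−1} > B_{k−1}) = P′(A_{k−1} < B_{k−1}). (Theorem 1, even-k case: the generalized ladder proof and the generalized FTI proof are equivalent up to relabeling of inputs and outputs, with outputs reversed via a ↦ d−1−a.) -/
/-- The generalized Hardy (ladder-proof) zero-probability conditions. -/
def HardyConds (k d : ℕ) (P : ℕ → ℕ → ℕ → ℕ → ℝ) : Prop :=
  (∀ i, 1 ≤ i → i ≤ k - 1 → Odd i →
    probGT d P i (i - 1) = 0 ∧ probGT d P (i - 1) i = 0) ∧
  (∀ i, 1 ≤ i → i ≤ k - 1 → Even i →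
    probLT d P i (i - 1) = 0 ∧ probLT d P (i - 1) i = 0) ∧
  probLT d P 0 0 = 0

/-- The generalized FTI zero-probability conditions. -/
def FTIConds (k d : ℕ) (P : ℕ → ℕ → ℕ → ℕ → ℝ) : Prop :=
  (∀ i, 1 ≤ i → i ≤ k - 1 →
    probLT d P i (i - 1) = 0 ∧ probGT d P (i - 1) (i - 1) = 0) ∧
  probLT d P 0 (k - 1) = 0

/-!
Reversing the outputs `a ↦ d - 1 - a` exchanges the events `A_x < B_y` and `A_x > B_y`, so the
FTI conditions on `P′` are zero conditions on `P` at the relabeled input pairs. Both families of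
conditions link the `2k` inputs into a single path from `A_{k-1}` to `B_{k-1}` whose constraints
alternate between `>` and `<` (`<` and `>` for FTI, before the reversal):
* FTI:   `A_{k-1}, B_{k-2}, A_{k-2}, B_{k-3}, …, A_1, B_0, A_0, B_{k-1}`,
* Hardy: `A_{k-1}, B_{k-2}, A_{k-3}, …, A_1, B_0, A_0, B_1, A_2, …, A_{k-2}, B_{k-1}`.
Sending each FTI input to the Hardy input at the same position on the path maps one family of
conditions onto the other and fixes the endpoints, hence also the success probability.
-/

open Finset

lemma sum_range_reflect_reflect {M : Type*} [AddCommMonoid M] (d : ℕ) (F : ℕ → ℕ → M) :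
    ∑ a ∈ range d, ∑ b ∈ range d, F (d - 1 - a) (d - 1 - b)
      = ∑ a ∈ range d, ∑ b ∈ range d, F a b :=
  calc _ = ∑ a ∈ range d, ∑ b ∈ range d, F (d - 1 - a) b :=
        sum_congr rfl fun a _ => sum_range_reflect (F (d - 1 - a)) d
    _ = _ := sum_range_reflect (fun a => ∑ b ∈ range d, F a b) d

section Reverse

variable (d : ℕ) (P : ℕ → ℕ → ℕ → ℕ → ℝ) (pA pB : ℕ → ℕ) (x y : ℕ)

lemma probLT_reverse :
    probLT d (fun a b x y => P (d - 1 - a) (d - 1 - b) (pA x) (pB y)) x y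
      = probGT d P (pA x) (pB y) := by
  rw [probGT, ← sum_range_reflect_reflect]
  refine sum_congr rfl fun a ha => sum_congr rfl fun b hb => ?_
  rw [mem_range] at ha hb
  exact if_congr (by omega) rfl rfl

lemma probGT_reverse :
    probGT d (fun a b x y => P (d - 1 - a) (d - 1 - b) (pA x) (pB y)) x y
      = probLT d P (pA x) (pB y) := by
  rw [probLT, ← sum_range_reflect_reflect]
  refine sum_congr rfl fun a ha => sum_congr rfl fun b hb => ?_
  rw [mem_range] at ha hb
  exact if_congr (by omega) rfl rfl

end Reverse

def hardyGTPairs (k : ℕ) : Set (ℕ × ℕ) :=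
  {(x, y) | (x ≤ k - 1 ∧ Odd x ∧ y = x - 1) ∨ (y ≤ k - 1 ∧ Odd y ∧ x = y - 1)}

def hardyLTPairs (k : ℕ) : Set (ℕ × ℕ) :=
  {(x, y) | (1 ≤ x ∧ x ≤ k - 1 ∧ Even x ∧ y = x - 1) ∨
    (1 ≤ y ∧ y ≤ k - 1 ∧ Even y ∧ x = y - 1) ∨ (x = 0 ∧ y = 0)}

def ftiLTPairs (k : ℕ) : Set (ℕ × ℕ) :=
  {(x, y) | (1 ≤ x ∧ x ≤ k - 1 ∧ y = x - 1) ∨ (x = 0 ∧ y = k - 1)}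

def ftiGTPairs (k : ℕ) : Set (ℕ × ℕ) :=
  {(x, y) | x + 1 ≤ k - 1 ∧ y = x}

section Conds

variable (k d : ℕ) (P : ℕ → ℕ → ℕ → ℕ → ℝ)

lemma hardyConds_iff : HardyConds k d P ↔
    (∀ p ∈ hardyGTPairs k, probGT d P p.1 p.2 = 0) ∧
      ∀ p ∈ hardyLTPairs k, probLT d P p.1 p.2 = 0 := by
  constructor
  · rintro ⟨hodd, heven, h00⟩
    refine ⟨?_, ?_⟩
    · rintro ⟨x, y⟩ (⟨h2, hi, rfl⟩ | ⟨h2, hi, rfl⟩)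
      exacts [(hodd x hi.pos h2 hi).1, (hodd y hi.pos h2 hi).2]
    · rintro ⟨x, y⟩ (⟨h1, h2, hi, rfl⟩ | ⟨h1, h2, hi, rfl⟩ | ⟨rfl, rfl⟩)
      exacts [(heven x h1 h2 hi).1, (heven y h1 h2 hi).2, h00]
  · rintro ⟨hGT, hLT⟩
    refine ⟨fun i h1 h2 hi => ⟨?_, ?_⟩, fun i h1 h2 hi => ⟨?_, ?_⟩,
      hLT (0, 0) (.inr (.inr ⟨rfl, rfl⟩))⟩
    exacts [hGT (i, _) (.inl ⟨h2, hi, rfl⟩), hGT (_, i) (.inr ⟨h2, hi, rfl⟩),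
      hLT (i, _) (.inl ⟨h1, h2, hi, rfl⟩), hLT (_, i) (.inr (.inl ⟨h1, h2, hi, rfl⟩))]

lemma ftiConds_iff : FTIConds k d P ↔
    (∀ p ∈ ftiLTPairs k, probLT d P p.1 p.2 = 0) ∧
      ∀ p ∈ ftiGTPairs k, probGT d P p.1 p.2 = 0 := by
  constructor
  · rintro ⟨hstep, hlast⟩
    refine ⟨?_, ?_⟩
    · rintro ⟨x, y⟩ (⟨h1, h2, rfl⟩ | ⟨rfl, rfl⟩)
      exacts [(hstep x h1 h2).1, hlast]
    · rintro ⟨x, y⟩ ⟨h, hy⟩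
      simpa [hy] using (hstep (x + 1) (by omega) h).2
  · rintro ⟨hLT, hGT⟩
    refine ⟨fun i h1 h2 => ⟨hLT (i, _) (.inl ⟨h1, h2, rfl⟩), hGT (i - 1, _) ⟨by omega, rfl⟩⟩,
      hLT (0, _) (.inr ⟨rfl, rfl⟩)⟩

end Conds

def relabelA (k j : ℕ) : ℕ := if 2 * j + 2 ≤ k then k - 2 - 2 * j else 2 * j + 1 - k

def relabelB (k j : ℕ) : ℕ :=
  if j + 1 = k then k - 1 else if 2 * j + 4 ≤ k then k - 3 - 2 * j else 2 * j + 2 - k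

def relabelAInv (k x : ℕ) : ℕ := if x % 2 = 0 then (k - 2 - x) / 2 else (k - 1 + x) / 2

def relabelBInv (k y : ℕ) : ℕ :=
  if y + 1 = k then k - 1 else if y % 2 = 0 then (k - 2 + y) / 2 else (k - 3 - y) / 2

section Relabel

variable {k : ℕ}

lemma invOn_relabelA (hk : Even k) :
    Set.InvOn (relabelAInv k) (relabelA k) (Set.Iio k) (Set.Iio k) := by
  rw [Nat.even_iff] at hk
  constructor <;> intro j hj <;> simp only [Set.mem_Iio, relabelA, relabelAInv] at hj ⊢ <;>
    split_ifs <;> omega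

lemma invOn_relabelB (hk : Even k) :
    Set.InvOn (relabelBInv k) (relabelB k) (Set.Iio k) (Set.Iio k) := by
  rw [Nat.even_iff] at hk
  constructor <;> intro j hj <;> simp only [Set.mem_Iio, relabelB, relabelBInv] at hj ⊢ <;>
    split_ifs <;> omega

lemma bijOn_relabelA (hk : Even k) : Set.BijOn (relabelA k) (Set.Iio k) (Set.Iio k) :=
  (invOn_relabelA hk).bijOn
    (fun j hj => by simp only [Set.mem_Iio, relabelA] at hj ⊢; split_ifs <;> omega)
    (fun x hx => by simp only [Set.mem_Iio, relabelAInv] at hx ⊢; split_ifs <;> omega)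

lemma bijOn_relabelB (hk : Even k) : Set.BijOn (relabelB k) (Set.Iio k) (Set.Iio k) :=
  (invOn_relabelB hk).bijOn
    (fun j hj => by simp only [Set.mem_Iio, relabelB] at hj ⊢; split_ifs <;> omega)
    (fun y hy => by simp only [Set.mem_Iio, relabelBInv] at hy ⊢; split_ifs <;> omega)

lemma image_ftiLTPairs (hk2 : 2 ≤ k) (hk : Even k) :
    Prod.map (relabelA k) (relabelB k) '' ftiLTPairs k = hardyGTPairs k := by
  have hmod := Nat.even_iff.mp hk
  ext ⟨x, y⟩
  simp only [Set.mem_image, Prod.exists, Prod.map, Prod.mk.injEq, ftiLTPairs, hardyGTPairs,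
    Set.mem_ofPred_eq, Nat.odd_iff]
  constructor
  · rintro ⟨a, b, h, rfl, rfl⟩
    simp only [relabelA, relabelB]
    split_ifs <;> omega
  · intro h
    refine ⟨relabelAInv k x, relabelBInv k y, ?_,
      (invOn_relabelA hk).2 (Set.mem_Iio.2 (by omega)),
      (invOn_relabelB hk).2 (Set.mem_Iio.2 (by omega))⟩
    simp only [relabelAInv, relabelBInv]
    split_ifs <;> omega

lemma image_ftiGTPairs (hk2 : 2 ≤ k) (hk : Even k) :
    Prod.map (relabelA k) (relabelB k) '' ftiGTPairs k = hardyLTPairs k := by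
  have hmod := Nat.even_iff.mp hk
  ext ⟨x, y⟩
  simp only [Set.mem_image, Prod.exists, Prod.map, Prod.mk.injEq, ftiGTPairs, hardyLTPairs,
    Set.mem_ofPred_eq, Nat.even_iff]
  constructor
  · rintro ⟨a, b, h, rfl, rfl⟩
    simp only [relabelA, relabelB]
    split_ifs <;> omega
  · intro h
    refine ⟨relabelAInv k x, relabelBInv k y, ?_,
      (invOn_relabelA hk).2 (Set.mem_Iio.2 (by omega)),
      (invOn_relabelB hk).2 (Set.mem_Iio.2 (by omega))⟩
    simp only [relabelAInv, relabelBInv]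
    split_ifs <;> omega

lemma relabelA_sub_one (hk : 0 < k) : relabelA k (k - 1) = k - 1 := by
  simp only [relabelA]; split_ifs <;> omega

lemma relabelB_sub_one (hk : 0 < k) : relabelB k (k - 1) = k - 1 := by
  simp only [relabelB]; split_ifs <;> omega

end Relabel

theorem stmt_12_general (k d : ℕ) (hk : 2 ≤ k) (hkeven : Even k) :
    ∃ pA pB : ℕ → ℕ,
      Set.BijOn pA (Set.Iio k) (Set.Iio k) ∧ Set.BijOn pB (Set.Iio k) (Set.Iio k) ∧
      ∀ P : ℕ → ℕ → ℕ → ℕ → ℝ,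
        (∀ a b x y, a < d → b < d → x < k → y < k → 0 ≤ P a b x y) →
        (∀ x y, x < k → y < k →
          ∑ a ∈ Finset.range d, ∑ b ∈ Finset.range d, P a b x y = 1) →
        (HardyConds k d P ↔ FTIConds k d (fun a b x y => P (d - 1 - a) (d - 1 - b) (pA x) (pB y))) ∧
        probGT d P (k - 1) (k - 1)
          = probLT d (fun a b x y => P (d - 1 - a) (d - 1 - b) (pA x) (pB y)) (k - 1) (k - 1) := by
  refine ⟨relabelA k, relabelB k, bijOn_relabelA hkeven, bijOn_relabelB hkeven,
    fun P _ _ => ⟨?_, ?_⟩⟩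
  · rw [hardyConds_iff, ftiConds_iff, ← image_ftiLTPairs hk hkeven,
      ← image_ftiGTPairs hk hkeven]
    simp only [Set.forall_mem_image, Prod.map_fst, Prod.map_snd, probLT_reverse, probGT_reverse]
  · rw [probLT_reverse, relabelA_sub_one (by omega), relabelB_sub_one (by omega)]

/-- Theorem 1, even-`k` case: there is a relabeling of inputs and (reversed) outputs turning the
generalized Hardy conditions into the generalized FTI conditions, preserving
the success probability: `P(A_{k−1} > B_{k−1}) = P′(A_{k−1} < B_{k−1})`. -/
theorem stmt_12 (k d : ℕ) (hk : 2 ≤ k) (hkeven : Even k) (hd : 2 ≤ d) :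
    ∃ pA pB : ℕ → ℕ,
      Set.BijOn pA (Set.Iio k) (Set.Iio k) ∧ Set.BijOn pB (Set.Iio k) (Set.Iio k) ∧
      ∀ P : ℕ → ℕ → ℕ → ℕ → ℝ,
        (∀ a b x y, a < d → b < d → x < k → y < k → 0 ≤ P a b x y) →
        (∀ x y, x < k → y < k →
          ∑ a ∈ Finset.range d, ∑ b ∈ Finset.range d, P a b x y = 1) →
        (HardyConds k d P ↔ FTIConds k d (fun a b x y => P (d - 1 - a) (d - 1 - b) (pA x) (pB y))) ∧
        probGT d P (k - 1) (k - 1)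
          = probLT d (fun a b x y => P (d - 1 - a) (d - 1 - b) (pA x) (pB y)) (k - 1) (k - 1) :=
  stmt_12_general k d hk hkeven
end

section
/- Let C ∈ [0,1] and choose θ = β = π/4 and α ∈ [0, π/2] with cosα = C. Then the two-qubit state |ψ⟩ = sinθ(cosα|0⟩ − sinα|1⟩)|1⟩ + cosθ|1⟩|0⟩ has concurrence 2·|c₀₀·c₁₁ − c₀₁·c₁₀| = C, and with the observables A₀ = σ_z, A₁ = cos(2α)σ_z − sin(2α)σ_x, B₀ = σ_z, B₁ = cos(2β)σ_z − sin(2β)σ_x and Born-rule probabilities P(a,b|x,y) = ⟨ψ| Π^{A_x}_a ⊗ Π^{B_y}_b |ψ⟩ (with Π^O_a = (I + (−1)^a O)/2), the degree of success of the FTI argument equals P(1,1|1,1) − P(1,1|0,1) = (√(1−C²)/2)·(1 − √(1−C²)). -/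
noncomputable section

/-- The Pauli matrix `σ_z`. -/
def pauliZ : Matrix (Fin 2) (Fin 2) ℂ := !![1, 0; 0, -1]

/-- The Pauli matrix `σ_x`. -/
def pauliX : Matrix (Fin 2) (Fin 2) ℂ := !![0, 1; 1, 0]

/-- The outcome-`a` projector `Π^O_a = (I + (−1)^a O)/2` of a ±1-valued observable `O`. -/
def outProj (O : Matrix (Fin 2) (Fin 2) ℂ) (a : Fin 2) : Matrix (Fin 2) (Fin 2) ℂ :=
  ((1 : ℂ) / 2) • (1 + ((-1 : ℂ) ^ (a : ℕ)) • O)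

/-- Alice's observables: `A 0 = σ_z`, `A 1 = cos(2α)σ_z − sin(2α)σ_x`. -/
def Aobs (α : ℝ) (x : Fin 2) : Matrix (Fin 2) (Fin 2) ℂ :=
  if x = 0 then pauliZ
  else (Real.cos (2 * α) : ℂ) • pauliZ - (Real.sin (2 * α) : ℂ) • pauliX

/-- Bob's observables: `B 0 = σ_z`, `B 1 = cos(2β)σ_z − sin(2β)σ_x`. -/
def Bobs (β : ℝ) (y : Fin 2) : Matrix (Fin 2) (Fin 2) ℂ :=
  if y = 0 then pauliZ
  else (Real.cos (2 * β) : ℂ) • pauliZ - (Real.sin (2 * β) : ℂ) • pauliX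

/-- Coefficients of `|ψ⟩ = sinθ(cosα|0⟩ − sinα|1⟩)|1⟩ + cosθ|1⟩|0⟩` in the basis `|ij⟩`:
`hardyState θ α i j` is the coefficient of `|i⟩|j⟩`. -/
def hardyState (θ α : ℝ) : Fin 2 → Fin 2 → ℂ :=
  fun i j =>
    if i = 0 then (if j = 0 then 0 else (Real.sin θ * Real.cos α : ℝ))
    else (if j = 0 then (Real.cos θ : ℝ) else (-(Real.sin θ * Real.sin α) : ℝ))

/-- `⟨ψ| M ⊗ N |ψ⟩` for a two-qubit vector with coefficients `ψ i j`. -/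
def born (ψ : Fin 2 → Fin 2 → ℂ) (M N : Matrix (Fin 2) (Fin 2) ℂ) : ℂ :=
  ∑ i, ∑ j, ∑ i', ∑ j', (starRingEnd ℂ) (ψ i j) * M i i' * N j j' * ψ i' j'

/-- The Born-rule behavior `P(a,b|x,y) = ⟨ψ| Π^{A_x}_a ⊗ Π^{B_y}_b |ψ⟩` for the Hardy
state and the observables above. -/
def bornProb (θ α β : ℝ) (a b x y : Fin 2) : ℂ :=
  born (hardyState θ α) (outProj (Aobs α x) a) (outProj (Bobs β y) b)

/-! All observables involved are of the form `cos(2γ)σ_z − sin(2γ)σ_x` (`γ = 0` for `σ_z`),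
whose outcome-1 projector is `|v_γ⟩⟨v_γ|` with `v_γ = (sin γ, cos γ)`. So `P(1,1|x,y)` is the
square of the real amplitude `⟨v_γ ⊗ v_δ|ψ⟩`, which is `cos α sin β cos θ` for `(x,y) = (1,1)` and
`sin β cos θ − cos β sin θ sin α` for `(x,y) = (0,1)`. At `θ = β = π/4`, with `sin α = √(1 − C²)`,
the difference of the squares is `(C² − (1 − sin α)²)/4 = sin α (1 − sin α)/2`. -/

open Real Matrix

def spinObs (γ : ℝ) : Matrix (Fin 2) (Fin 2) ℂ :=
  (Real.cos (2 * γ) : ℂ) • pauliZ - (Real.sin (2 * γ) : ℂ) • pauliX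

def spinVec (γ : ℝ) : Fin 2 → ℂ := ![(Real.sin γ : ℂ), (Real.cos γ : ℂ)]

lemma star_spinVec_apply (γ : ℝ) (i : Fin 2) : star (spinVec γ i) = spinVec γ i := by
  fin_cases i <;> exact Complex.conj_ofReal _

lemma outProj_spinObs_one (γ : ℝ) :
    outProj (spinObs γ) 1 = vecMulVec (spinVec γ) (star (spinVec γ)) := by
  ext i j
  rw [vecMulVec_apply, Pi.star_apply, star_spinVec_apply]
  fin_cases i <;> fin_cases j <;>
    simp [outProj, spinObs, spinVec, pauliZ, pauliX, Complex.sin_two_mul, Complex.cos_two_mul] <;>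
    grind [Complex.sin_sq_add_cos_sq]

lemma born_vecMulVec (ψ : Fin 2 → Fin 2 → ℂ) (u w : Fin 2 → ℂ) :
    born ψ (vecMulVec u (star u)) (vecMulVec w (star w)) =
      starRingEnd ℂ (∑ i, ∑ j, star (u i) * star (w j) * ψ i j) *
        ∑ i, ∑ j, star (u i) * star (w j) * ψ i j := by
  simp only [born, vecMulVec_apply, Pi.star_apply, Fin.sum_univ_two, map_add, map_mul,
    Complex.star_def, Complex.conj_conj]
  ring

def hardyAmp (θ α γ δ : ℝ) : ℝ :=
  sin γ * cos δ * sin θ * cos α + cos γ * sin δ * cos θ - cos γ * cos δ * sin θ * sin α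

lemma sum_spinVec_mul_hardyState (θ α γ δ : ℝ) :
    ∑ i, ∑ j, spinVec γ i * spinVec δ j * hardyState θ α i j = (hardyAmp θ α γ δ : ℂ) := by
  simp only [Fin.sum_univ_two, spinVec, hardyState, hardyAmp, Fin.isValue, if_pos, if_neg one_ne_zero,
    cons_val_zero, cons_val_one, cons_val_fin_one, Complex.ofReal_mul, Complex.ofReal_neg,
    Complex.ofReal_sub, Complex.ofReal_add, mul_zero, zero_add]
  ring

lemma born_hardyState_spinObs (θ α γ δ : ℝ) :
    born (hardyState θ α) (outProj (spinObs γ) 1) (outProj (spinObs δ) 1) =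
      ((hardyAmp θ α γ δ ^ 2 : ℝ) : ℂ) := by
  rw [outProj_spinObs_one, outProj_spinObs_one, born_vecMulVec]
  simp only [star_spinVec_apply, sum_spinVec_mul_hardyState, Complex.conj_ofReal]
  push_cast
  ring

lemma Aobs_zero (α : ℝ) : Aobs α 0 = spinObs 0 := by
  simp [Aobs, spinObs]

lemma Aobs_one (α : ℝ) : Aobs α 1 = spinObs α := by
  simp [Aobs, spinObs]

lemma Bobs_one (β : ℝ) : Bobs β 1 = spinObs β := by
  simp [Bobs, spinObs]

lemma bornProb_one_one_sub (θ α β : ℝ) :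
    bornProb θ α β 1 1 1 1 - bornProb θ α β 1 1 0 1 =
      (((cos α * sin β * cos θ) ^ 2 - (sin β * cos θ - cos β * sin θ * sin α) ^ 2 : ℝ) : ℂ) := by
  rw [bornProb, bornProb, Aobs_one, Aobs_zero, Bobs_one, born_hardyState_spinObs,
    born_hardyState_spinObs, hardyAmp, hardyAmp]
  simp only [sin_zero, cos_zero]
  push_cast
  ring

lemma hardyState_concurrence (θ α : ℝ) :
    2 * ‖hardyState θ α 0 0 * hardyState θ α 1 1 - hardyState θ α 0 1 * hardyState θ α 1 0‖
      = |sin (2 * θ) * cos α| := by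
  simp only [hardyState, if_pos, if_neg one_ne_zero, zero_mul, zero_sub,
    norm_neg, ← Complex.ofReal_mul, Complex.norm_real, Real.norm_eq_abs, sin_two_mul]
  rw [← abs_two, ← abs_mul, abs_two]
  ring_nf

theorem stmt_16_general (C : ℝ) (θ β α : ℝ)
    (hθ : θ = Real.pi / 4) (hβ : β = Real.pi / 4)
    (hα : α ∈ Set.Icc 0 (Real.pi / 2)) (hcos : Real.cos α = C) :
    2 * ‖hardyState θ α 0 0 * hardyState θ α 1 1 - hardyState θ α 0 1 * hardyState θ α 1 0‖
      = C ∧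
    bornProb θ α β 1 1 1 1 - bornProb θ α β 1 1 0 1 =
      ((Real.sqrt (1 - C ^ 2) / 2 * (1 - Real.sqrt (1 - C ^ 2)) : ℝ) : ℂ) := by
  subst hθ hβ hcos
  have hcos_nonneg : 0 ≤ cos α := cos_nonneg_of_mem_Icc ⟨by linarith [hα.1, pi_pos], hα.2⟩
  have hsin : √(1 - cos α ^ 2) = sin α :=
    (sin_eq_sqrt_one_sub_cos_sq hα.1 (by linarith [hα.2, pi_pos])).symm
  have hpi : 2 * (π / 4) = π / 2 := by ring
  refine ⟨?_, ?_⟩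
  · rw [hardyState_concurrence, hpi, sin_pi_div_two, one_mul, abs_of_nonneg hcos_nonneg]
  · rw [bornProb_one_one_sub, hsin, sin_pi_div_four, cos_pi_div_four]
    congr 1
    have hsqrt2 : √2 ^ 2 = 2 := sq_sqrt zero_le_two
    linear_combination sin_sq_add_cos_sq α / 4 +
      (cos α ^ 2 - (1 - sin α) ^ 2) * (√2 ^ 2 + 2) / 16 * hsqrt2

/-- For `θ = β = π/4` and `cosα = C ∈ [0,1]`, the Hardy state has concurrence `C` and
the FTI degree of success equals `(√(1−C²)/2)·(1 − √(1−C²))`. -/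
theorem stmt_16 (C : ℝ) (hC : C ∈ Set.Icc 0 1) (θ β α : ℝ)
    (hθ : θ = Real.pi / 4) (hβ : β = Real.pi / 4)
    (hα : α ∈ Set.Icc 0 (Real.pi / 2)) (hcos : Real.cos α = C) :
    2 * ‖hardyState θ α 0 0 * hardyState θ α 1 1 - hardyState θ α 0 1 * hardyState θ α 1 0‖
      = C ∧
    bornProb θ α β 1 1 1 1 - bornProb θ α β 1 1 0 1 =
      ((Real.sqrt (1 - C ^ 2) / 2 * (1 - Real.sqrt (1 - C ^ 2)) : ℝ) : ℂ) :=
  stmt_16_general C θ β α hθ hβ hα hcos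

end
end
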